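/- For a cobweb poset Π designated by a sequence F with F₀ = 1, the value μ(0̂, x) depends only on the rank of x; that is, if x and y are elements of Π with r(x) = r(y), then μ(0̂, x) = μ(0̂, y). -/

import Mathlib

/-- The cobweb order relation on pairs `(j, s)` where `s` is the level:
`⟨j,s⟩ ≤ ⟨q,u⟩` iff `s < u` or (`s = u` and `j = q`). -/
def cobwebLE (p q : ℕ × ℕ) : Prop :=
  p.2 < q.2 ∨ (p.2 = q.2 ∧ p.1 = q.1)

/-- Vertices of the cobweb poset designated by `F`: pairs `(j, s)` with `1 ≤ j ≤ F s`. -/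
def CobwebVertex (F : ℕ → ℕ) : Type :=
  {p : ℕ × ℕ // 1 ≤ p.1 ∧ p.1 ≤ F p.2}

instance (F : ℕ → ℕ) : PartialOrder (CobwebVertex F) where
  le x y := cobwebLE x.val y.val
  le_refl x := Or.inr ⟨rfl, rfl⟩
  le_trans x y z hxy hyz := by
    rcases hxy with h | ⟨h1, h2⟩
    · rcases hyz with h' | ⟨h1', h2'⟩
      · exact Or.inl (h.trans h')
      · exact Or.inl (h1' ▸ h)
    · rcases hyz with h' | ⟨h1', h2'⟩
      · exact Or.inl (h1 ▸ h')
      · exact Or.inr ⟨h1.trans h1', h2.trans h2'⟩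
  le_antisymm x y hxy hyx := by
    rcases hxy with h | ⟨h1, h2⟩
    · rcases hyx with h' | ⟨h1', h2'⟩
      · exact absurd (h.trans h') (lt_irrefl _)
      · exact absurd (h1' ▸ h) (lt_irrefl _)
    · rcases hyx with h' | ⟨h1', h2'⟩
      · exact absurd (h1 ▸ h') (lt_irrefl _)
      · exact Subtype.ext (Prod.ext h2 h1)

/-- The rank of a vertex is its level. -/
def rank {F : ℕ → ℕ} (x : CobwebVertex F) : ℕ := x.val.2


/-!
Every vertex of lower rank lies below a vertex `w`, so for `rank w > 0` the interval `[0̂, w]`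
is `{z | rank z < rank w} ∪ {w}`. The defining recursion of `μ` then gives
`μ(0̂, w) = -∑_{rank z < rank w} μ(0̂, z)`, whose right-hand side involves `w` only through its
rank. In rank `0` there is a single vertex, since `F 0 = 1`.
-/

namespace CobwebVertex

variable {F : ℕ → ℕ}

theorem le_iff {x y : CobwebVertex F} : x ≤ y ↔ rank x < rank y ∨ x = y := by
  refine or_congr Iff.rfl ⟨fun ⟨h2, h1⟩ => Subtype.ext (Prod.ext h1 h2), ?_⟩
  rintro rfl
  exact ⟨rfl, rfl⟩

theorem Iic_eq (w : CobwebVertex F) : Set.Iic w = {z | rank z < rank w} ∪ {w} := by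
  ext z
  simp only [Set.mem_Iic, le_iff, Set.mem_union, Set.mem_ofPred_eq, Set.mem_singleton_iff]

theorem finite_setOf_rank_lt (s : ℕ) : {z : CobwebVertex F | rank z < s}.Finite := by
  let N := (Finset.range s).sup F
  refine (((Set.finite_Icc 1 N).prod (Set.finite_Iio s)).preimage
    Subtype.val_injective.injOn).subset fun z (hz : z.val.2 < s) => ?_
  exact ⟨⟨z.property.1, z.property.2.trans (Finset.le_sup (Finset.mem_range.mpr hz))⟩, hz⟩

theorem eq_of_rank_eq_zero (hF0 : F 0 = 1) {x y : CobwebVertex F}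
    (hx : rank x = 0) (hy : rank y = 0) : x = y := by
  have first_eq_one : ∀ z : CobwebVertex F, rank z = 0 → z.val.1 = 1 := fun z hz => by
    have := z.property.2
    rw [show z.val.2 = 0 from hz, hF0] at this
    exact le_antisymm this z.property.1
  exact Subtype.ext
    (Prod.ext ((first_eq_one x hx).trans (first_eq_one y hy).symm) (hx.trans hy.symm))

theorem le_of_rank_eq_zero (hF0 : F 0 = 1) {x : CobwebVertex F} (hx : rank x = 0)
    (y : CobwebVertex F) : x ≤ y := by
  rcases Nat.eq_zero_or_pos (rank y) with hy | hy
  · exact (eq_of_rank_eq_zero hF0 hx hy).le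
  · exact le_iff.mpr (Or.inl (hx ▸ hy))

theorem eq_neg_finsum_rank_lt_of_finsum_Icc_eq_zero (μ : CobwebVertex F → CobwebVertex F → ℤ)
    {zero w : CobwebVertex F} (hbot : ∀ z, zero ≤ z)
    (hsum : ∑ᶠ z ∈ Set.Icc zero w, μ zero z = 0) :
    μ zero w = -∑ᶠ z ∈ {z | rank z < rank w}, μ zero z := by
  have hIcc : Set.Icc zero w = {z | rank z < rank w} ∪ {w} := by
    rw [← Iic_eq]
    ext z
    exact and_iff_right (hbot z)
  rw [hIcc, finsum_mem_union (by simp) (finite_setOf_rank_lt _) (Set.finite_singleton w),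
    finsum_mem_singleton] at hsum
  linarith

end CobwebVertex

open CobwebVertex in
theorem cobweb_mobius_rank_invariant_general (F : ℕ → ℕ) (hF0 : F 0 = 1)
    (μ : CobwebVertex F → CobwebVertex F → ℤ)
    (zero : CobwebVertex F) (hzero : zero.val = (1, 0))
    (hμ_sum : ∀ x y : CobwebVertex F, x < y → ∑ᶠ z ∈ Set.Icc x y, μ x z = 0)
    (x y : CobwebVertex F) (h : rank x = rank y) :
    μ zero x = μ zero y := by
  have hzero_rank : rank zero = 0 := congrArg Prod.snd hzero
  have hbot := le_of_rank_eq_zero hF0 hzero_rank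
  rcases Nat.eq_zero_or_pos (rank x) with hx | hx
  · rw [eq_of_rank_eq_zero hF0 hx (h ▸ hx)]
  have zero_lt : ∀ w : CobwebVertex F, 0 < rank w → zero < w := fun w hw =>
    (hbot w).lt_of_ne fun hzw => hw.ne' (hzw ▸ hzero_rank)
  rw [eq_neg_finsum_rank_lt_of_finsum_Icc_eq_zero μ hbot (hμ_sum zero x (zero_lt x hx)),
    eq_neg_finsum_rank_lt_of_finsum_Icc_eq_zero μ hbot (hμ_sum zero y (zero_lt y (h ▸ hx))), h]

theorem cobweb_mobius_rank_invariant (F : ℕ → ℕ) (hF0 : F 0 = 1)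
    (μ : CobwebVertex F → CobwebVertex F → ℤ)
    (zero : CobwebVertex F) (hzero : zero.val = (1, 0))
    (hμ_refl : ∀ x : CobwebVertex F, μ x x = 1)
    (hμ_sum : ∀ x y : CobwebVertex F, x < y → ∑ᶠ z ∈ Set.Icc x y, μ x z = 0)
    (x y : CobwebVertex F) (h : rank x = rank y) :
    μ zero x = μ zero y :=
  cobweb_mobius_rank_invariant_general F hF0 μ zero hzero hμ_sum x y h
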